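/- Let n ≥ 1, κ ∈ ℝ, and X_1,…,X_n ∈ ℝ. For a provisional value x ∈ ℝ set X_{n+1} = x and define μ_i(x) = X_i² − κ Σ_{j ∈ {1,…,n+1}, j ≠ i} X_j for i = 1,…,n+1. Put a_i = min(X_i, −(κ + X_i)) and b_i = max(X_i, −(κ + X_i)) for i = 1,…,n. Then for every α ∈ (0,1) with (n+1)α not an integer and r := ⌊(n+1)α⌋ satisfying 1 ≤ r ≤ n, the conformal prediction region {x ∈ ℝ : #{i ∈ {1,…,n+1} : μ_i(x) ≥ μ_{n+1}(x)} > (n+1)α} equals the bounded interval {x ∈ ℝ : a_{(r)} ≤ x ≤ b_{(n+1−r)}}, where a_{(k)} and b_{(k)} denote the k-th smallest values among a_1,…,a_n and b_1,…,b_n respectively. -/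
import Mathlib

private lemma quad_mem_iff (κ u x : ℝ) :
    x ^ 2 + κ * x ≤ u ^ 2 + κ * u ↔
      (min u (-(κ + u)) ≤ x ∧ x ≤ max u (-(κ + u))) := by
  rcases le_total u (-(κ + u)) with h | h
  · rw [min_eq_left h, max_eq_right h]
    constructor
    · intro hq
      constructor <;> by_contra hc <;> push_neg at hc <;> nlinarith
    · rintro ⟨h1, h2⟩; nlinarith
  · rw [min_eq_right h, max_eq_left h]
    constructor
    · intro hq
      constructor <;> by_contra hc <;> push_neg at hc <;> nlinarith
    · rintro ⟨h1, h2⟩; nlinarith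

private lemma count_ge_iff {n r : ℕ} (hr1 : 1 ≤ r) (hrn : r ≤ n)
    (P : Fin n → Prop) [DecidablePred P]
    (hlow : ∀ k l : Fin n, k ≤ l → P l → P k) :
    r ≤ (Finset.univ.filter P).card ↔ P ⟨r - 1, by omega⟩ := by
  constructor
  · intro h
    by_contra hP
    have hsub : Finset.univ.filter P ⊆ Finset.Iio ⟨r - 1, by omega⟩ := by
      intro k hk
      rw [Finset.mem_filter] at hk
      rw [Finset.mem_Iio]
      by_contra hlt
      push_neg at hlt
      exact hP (hlow _ _ hlt hk.2)
    have hc := Finset.card_le_card hsub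
    rw [Fin.card_Iio] at hc
    simp only at hc
    omega
  · intro h
    have hsub : Finset.Iic (⟨r - 1, by omega⟩ : Fin n) ⊆ Finset.univ.filter P := by
      intro k hk
      rw [Finset.mem_Iic] at hk
      rw [Finset.mem_filter]
      exact ⟨Finset.mem_univ _, hlow _ _ hk h⟩
    have hc := Finset.card_le_card hsub
    rw [Fin.card_Iic] at hc
    simp only at hc
    omega

/-- Theorem 9 of the paper (unsupervised learning, corrected): for the
quadratic non-conformity measure with scores
`μ_i(x) = X_i² − κ Σ_{j ≠ i} X_j` (with `X_{n+1} = x`), the conformal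
prediction region `{x : #{i : μ_i(x) ≥ μ_{n+1}(x)} > (n+1)α}` is the bounded
interval `[a_{(r)}, b_{(n+1−r)}]`, where `a_i = min(X_i, −(κ + X_i))`,
`b_i = max(X_i, −(κ + X_i))`, and `r = ⌊(n+1)α⌋`. -/
theorem stmt_19
    (n : ℕ) (hn : 1 ≤ n) (κ : ℝ)
    (X : Fin n → ℝ)
    (μ : ℝ → Fin (n + 1) → ℝ)
    (hμ : ∀ (x : ℝ) (i : Fin (n + 1)),
      μ x i = ((Fin.snoc X x : Fin (n + 1) → ℝ) i) ^ 2
        - κ * ∑ j ∈ Finset.univ.erase i, (Fin.snoc X x : Fin (n + 1) → ℝ) j)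
    (a b : Fin n → ℝ)
    (ha : ∀ i : Fin n, a i = min (X i) (-(κ + X i)))
    (hb : ∀ i : Fin n, b i = max (X i) (-(κ + X i))) :
    ∀ (α : ℝ) (_ : α ∈ Set.Ioo (0 : ℝ) 1)
      (_ : ∀ k : ℤ, ((n : ℝ) + 1) * α ≠ (k : ℝ))
      (r : ℕ) (_ : (r : ℤ) = ⌊((n : ℝ) + 1) * α⌋) (_ : 1 ≤ r) (_ : r ≤ n),
      {x : ℝ | ((n : ℝ) + 1) * α <
          ((Finset.univ.filter
            (fun i : Fin (n + 1) => μ x (Fin.last n) ≤ μ x i)).card : ℝ)}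
        = Set.Icc ((a ∘ Tuple.sort a) ⟨r - 1, by omega⟩)
            ((b ∘ Tuple.sort b) ⟨n - r, by omega⟩) := by
  intro α hα hnint r hr hr1 hrn
  set σ := Tuple.sort a with hσ
  -- b = -κ - a pointwise
  have hba : ∀ i : Fin n, b i = -κ - a i := by
    intro i
    rw [ha, hb]
    rcases le_total (X i) (-(κ + X i)) with h | h
    · rw [min_eq_left h, max_eq_right h]; ring
    · rw [min_eq_right h, max_eq_left h]; ring
  have hmono : Monotone (a ∘ σ) := Tuple.monotone_sort a
  -- the pointwise condition
  have hcond : ∀ (x : ℝ) (i : Fin n),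
      (μ x (Fin.last n) ≤ μ x (Fin.castSucc i)) ↔ (a i ≤ x ∧ x ≤ b i) := by
    intro x i
    have htot : ∑ j : Fin (n + 1), (Fin.snoc X x : Fin (n + 1) → ℝ) j
        = (∑ j : Fin n, X j) + x := by
      rw [Fin.sum_univ_castSucc]
      simp
    have h1 : μ x (Fin.last n) = x ^ 2 - κ * (∑ j : Fin n, X j) := by
      rw [hμ, Finset.sum_erase_eq_sub (Finset.mem_univ _), htot]
      simp
    have h2 : μ x (Fin.castSucc i)
        = (X i) ^ 2 - κ * ((∑ j : Fin n, X j) + x - X i) := by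
      rw [hμ, Finset.sum_erase_eq_sub (Finset.mem_univ _), htot]
      simp
    rw [h1, h2, ha, hb]
    rw [← quad_mem_iff κ (X i) x]
    constructor <;> intro hq <;> nlinarith
  -- counting
  have hcount : ∀ x : ℝ,
      ((Finset.univ.filter
        (fun i : Fin (n + 1) => μ x (Fin.last n) ≤ μ x i)).card)
      = (Finset.univ.filter (fun k : Fin n => a (σ k) ≤ x ∧ x ≤ b (σ k))).card
        + 1 := by
    intro x
    rw [Finset.card_filter, Finset.card_filter, Fin.sum_univ_castSucc]
    have hlast : (if μ x (Fin.last n) ≤ μ x (Fin.last n) then 1 else 0) = 1 := by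
      simp
    rw [hlast]
    congr 1
    rw [← Equiv.sum_comp σ
      (fun i : Fin n => if μ x (Fin.last n) ≤ μ x (Fin.castSucc i) then 1 else 0)]
    refine Finset.sum_congr rfl fun k _ => ?_
    by_cases h : a (σ k) ≤ x ∧ x ≤ b (σ k)
    · rw [if_pos ((hcond x (σ k)).mpr h), if_pos h]
    · rw [if_neg (fun hc => h ((hcond x (σ k)).mp hc)), if_neg h]
  -- identify b ∘ sort b
  have hrevmono : Monotone (b ∘ ((Fin.revPerm (n := n)).trans σ)) := by
    intro k l hkl
    have hrev : Fin.rev l ≤ Fin.rev k := Fin.rev_le_rev.mpr hkl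
    simp only [Function.comp_apply, Equiv.trans_apply, Fin.revPerm_apply]
    rw [hba, hba]
    have := hmono hrev
    simp only [Function.comp_apply] at this
    linarith
  have hbsort : b ∘ ((Fin.revPerm (n := n)).trans σ) = b ∘ Tuple.sort b :=
    Tuple.comp_sort_eq_comp_iff_monotone.mpr hrevmono
  have hrevidx : Fin.rev (⟨n - r, by omega⟩ : Fin n) = ⟨r - 1, by omega⟩ := by
    apply Fin.ext
    simp [Fin.rev]
    omega
  have hBeq : (b ∘ Tuple.sort b) ⟨n - r, by omega⟩ = b (σ ⟨r - 1, by omega⟩) := by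
    rw [← hbsort]
    simp only [Function.comp_apply, Equiv.trans_apply, Fin.revPerm_apply, hrevidx]
  -- floor bounds
  have hfloor1 : (r : ℝ) ≤ ((n : ℝ) + 1) * α := by
    have := Int.floor_le (((n : ℝ) + 1) * α)
    rw [← hr] at this
    exact_mod_cast this
  have hfloor2 : ((n : ℝ) + 1) * α < (r : ℝ) + 1 := by
    have := Int.lt_floor_add_one (((n : ℝ) + 1) * α)
    rw [← hr] at this
    exact_mod_cast this
  ext x
  simp only [Set.mem_setOf_eq, Set.mem_Icc, hcount x]
  set N := (Finset.univ.filter (fun k : Fin n => a (σ k) ≤ x ∧ x ≤ b (σ k))).card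
    with hN
  have hthresh : ((n : ℝ) + 1) * α < ((N + 1 : ℕ) : ℝ) ↔ r ≤ N := by
    constructor
    · intro h
      have : (r : ℝ) < ((N + 1 : ℕ) : ℝ) := lt_of_le_of_lt hfloor1 h
      have : r < N + 1 := by exact_mod_cast this
      omega
    · intro h
      have : (r : ℝ) + 1 ≤ ((N + 1 : ℕ) : ℝ) := by
        push_cast
        have : (r : ℝ) ≤ (N : ℝ) := by exact_mod_cast h
        linarith
      linarith
  rw [hthresh]
  have hlow : ∀ k l : Fin n, k ≤ l →
      (a (σ l) ≤ x ∧ x ≤ b (σ l)) → (a (σ k) ≤ x ∧ x ≤ b (σ k)) := by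
    intro k l hkl ⟨h1, h2⟩
    have hm := hmono hkl
    simp only [Function.comp_apply] at hm
    constructor
    · linarith
    · rw [hba] at h2 ⊢
      linarith
  rw [hN, count_ge_iff hr1 hrn _ hlow, hBeq]
  simp [Function.comp_apply]
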